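/- Let X₁, …, Xₙ be independent real-valued random variables with means μⱼ = E[Xⱼ], such that the centred variables Xⱼ − μⱼ have finite forward deviations σ_{f,j} and backward deviations σ_{b,j}. Let a ∈ ℝⁿ, b ∈ ℝ, ε ∈ (0,1), and set uⱼ := max(aⱼ·σ_{f,j}, −aⱼ·σ_{b,j}). If ⟨a, μ⟩ + √(−2·log ε) · ‖u‖₂ ≤ b, then Pr( ⟨a, X⟩ ≤ b ) ≥ 1 − ε. That is, the second-order cone constraint with safety factor √(−2 ln ε) is a safe approximation of the chance constraint at level ε. -/

import Mathlib

/-!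
For `θ ≥ 0`, the definition of the forward deviation bounds `log E[exp(θZ)]` by `θ² σ_f(Z)² / 2`.
Applied to `Z = Xⱼ - mⱼ` when `aⱼ ≥ 0` and to `Z = -(Xⱼ - mⱼ)` when `aⱼ < 0`, this shows that
`E[exp(θ aⱼ (Xⱼ - mⱼ))] ≤ exp(θ² uⱼ² / 2)`. By independence the sum `S = ⟨a, X - m⟩` then has
moment generating function at most `exp(θ² ‖u‖² / 2)` on `θ ≥ 0`, and Chernoff's bound gives
`Pr(S > t) ≤ exp(-t² / (2‖u‖²)) ≤ ε` for `t = b - ⟨a, m⟩ ≥ √(-2 ln ε) ‖u‖`.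
-/

open MeasureTheory ProbabilityTheory

/-- The set of candidate values whose supremum is the forward deviation
`σ_f(X) = sup_{θ>0} √(2 θ⁻² log E[exp(θX)])`. -/
def fwdDevSet {Ω : Type*} [MeasurableSpace Ω] (μ : Measure Ω) (X : Ω → ℝ) : Set ℝ :=
  {s : ℝ | ∃ θ : ℝ, 0 < θ ∧
    s = Real.sqrt (2 * θ⁻¹ ^ 2 * Real.log (∫ ω, Real.exp (θ * X ω) ∂μ))}

/-- The forward deviation of a random variable `X`:
`σ_f(X) = sup_{θ>0} √(2 θ⁻² log E[exp(θX)])`.  The backward deviation is `σ_b(X) = σ_f(−X)`. -/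
noncomputable def fwdDev {Ω : Type*} [MeasurableSpace Ω] (μ : Measure Ω) (X : Ω → ℝ) : ℝ :=
  sSup (fwdDevSet μ X)

open Real
open scoped ENNReal

section ForwardDeviation

variable {Ω : Type*} [MeasurableSpace Ω] {μ : Measure Ω} {X : Ω → ℝ}

lemma fwdDev_nonneg (hbdd : BddAbove (fwdDevSet μ X)) : 0 ≤ fwdDev μ X :=
  (sqrt_nonneg _).trans (le_csSup hbdd ⟨1, one_pos, rfl⟩)

lemma log_integral_exp_le_fwdDev (hbdd : BddAbove (fwdDevSet μ X)) {θ : ℝ} (hθ : 0 < θ) :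
    log (∫ ω, exp (θ * X ω) ∂μ) ≤ θ ^ 2 * fwdDev μ X ^ 2 / 2 := by
  set L := log (∫ ω, exp (θ * X ω) ∂μ)
  rcases le_or_gt L 0 with hL | hL
  · exact hL.trans (by positivity)
  have hsqrt : √(2 * θ⁻¹ ^ 2 * L) ≤ fwdDev μ X := le_csSup hbdd ⟨θ, hθ, rfl⟩
  have hsq : 2 * θ⁻¹ ^ 2 * L ≤ fwdDev μ X ^ 2 := (sqrt_le_iff.1 hsqrt).2
  calc L = θ ^ 2 / 2 * (2 * θ⁻¹ ^ 2 * L) := by field_simp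
    _ ≤ θ ^ 2 / 2 * fwdDev μ X ^ 2 := by gcongr
    _ = θ ^ 2 * fwdDev μ X ^ 2 / 2 := by ring

lemma mgf_le_exp_fwdDev [IsProbabilityMeasure μ] (hbdd : BddAbove (fwdDevSet μ X)) {θ : ℝ}
    (hθ : 0 ≤ θ) : mgf X μ θ ≤ exp (θ ^ 2 * fwdDev μ X ^ 2 / 2) := by
  rcases hθ.eq_or_lt with rfl | hθ
  · simp
  rcases mgf_nonneg.eq_or_lt with h0 | hpos
  · rw [← h0]
    positivity
  rw [← exp_log hpos]
  exact exp_le_exp.2 (log_integral_exp_le_fwdDev hbdd hθ)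

lemma mgf_const_mul_le_exp_max_fwdDev [IsProbabilityMeasure μ]
    (hf : BddAbove (fwdDevSet μ X)) (hb : BddAbove (fwdDevSet μ (fun ω => -X ω)))
    (a : ℝ) {θ : ℝ} (hθ : 0 ≤ θ) :
    mgf (fun ω => a * X ω) μ θ ≤
      exp (θ ^ 2 * max (a * fwdDev μ X) (-a * fwdDev μ (fun ω => -X ω)) ^ 2 / 2) := by
  set u := max (a * fwdDev μ X) (-a * fwdDev μ (fun ω => -X ω))
  have key : ∀ (Z : Ω → ℝ) (c : ℝ), 0 ≤ c → c * fwdDev μ Z ≤ u → BddAbove (fwdDevSet μ Z) →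
      mgf Z μ (c * θ) ≤ exp (θ ^ 2 * u ^ 2 / 2) := fun Z c hc hcu hZ => by
    have hσ : 0 ≤ c * fwdDev μ Z := mul_nonneg hc (fwdDev_nonneg hZ)
    calc mgf Z μ (c * θ) ≤ exp ((c * θ) ^ 2 * fwdDev μ Z ^ 2 / 2) :=
          mgf_le_exp_fwdDev hZ (by positivity)
      _ = exp (θ ^ 2 * (c * fwdDev μ Z) ^ 2 / 2) := by ring_nf
      _ ≤ exp (θ ^ 2 * u ^ 2 / 2) := by gcongr
  rcases le_or_gt 0 a with ha | ha
  · rw [mgf_const_mul]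
    exact key X a ha (le_max_left _ _) hf
  · have hneg : (fun ω => a * X ω) = fun ω => -a * -X ω := by simp
    rw [hneg, mgf_const_mul]
    exact key _ (-a) (by linarith) (le_max_right _ _) hb

end ForwardDeviation

section Chernoff

variable {Ω ι : Type*} [MeasurableSpace Ω] {μ : Measure Ω}

lemma ProbabilityTheory.iIndepFun.mgf_sum_le_exp {Y : ι → Ω → ℝ} (h_indep : iIndepFun Y μ)
    (h_meas : ∀ i, Measurable (Y i)) (s : Finset ι) (v : ι → ℝ) {θ : ℝ}
    (h : ∀ i ∈ s, mgf (Y i) μ θ ≤ exp (θ ^ 2 * v i / 2)) :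
    mgf (∑ i ∈ s, Y i) μ θ ≤ exp (θ ^ 2 * (∑ i ∈ s, v i) / 2) := by
  rw [h_indep.mgf_sum h_meas, Finset.mul_sum, Finset.sum_div, exp_sum]
  exact Finset.prod_le_prod (fun _ _ => mgf_nonneg) h

/-- Chernoff's bound at `θ = c / s`, for which `-θ s + θ² v / 2 ≤ -c / 2` as soon as `c v ≤ s²`. -/
lemma measureReal_ge_le_exp_of_mgf_le [IsFiniteMeasure μ] {S : Ω → ℝ} {v c s : ℝ}
    (hint : ∀ θ, 0 ≤ θ → Integrable (fun ω => exp (θ * S ω)) μ)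
    (hmgf : ∀ θ, 0 ≤ θ → mgf S μ θ ≤ exp (θ ^ 2 * v / 2))
    (hc : 0 ≤ c) (hs : 0 < s) (hcv : c * v ≤ s ^ 2) :
    μ.real {ω | s ≤ S ω} ≤ exp (-c / 2) := by
  have hθ : 0 ≤ c / s := by positivity
  have hexp : -(c / s) * s + (c / s) ^ 2 * v / 2 ≤ -c / 2 := by
    have : c * (c * v) ≤ c * s ^ 2 := mul_le_mul_of_nonneg_left hcv hc
    rw [div_pow, ← sub_nonneg]
    field_simp
    nlinarith
  calc μ.real {ω | s ≤ S ω} ≤ exp (-(c / s) * s) * mgf S μ (c / s) :=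
        measure_ge_le_exp_mul_mgf s hθ (hint _ hθ)
    _ ≤ exp (-(c / s) * s) * exp ((c / s) ^ 2 * v / 2) := by gcongr; exact hmgf _ hθ
    _ ≤ exp (-c / 2) := by rw [← exp_add]; exact exp_le_exp.2 hexp

lemma measure_lt_le_of_forall_lt {S : Ω → ℝ} {t : ℝ} {r : ℝ≥0∞}
    (h : ∀ s, t < s → μ {ω | s ≤ S ω} ≤ r) : μ {ω | t < S ω} ≤ r := by
  have hunion : {ω | t < S ω} = ⋃ n : ℕ, {ω | t + 1 / ((n : ℝ) + 1) ≤ S ω} := by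
    ext ω
    simp only [Set.mem_ofPred_eq, Set.mem_iUnion]
    refine ⟨fun hω => ?_, fun ⟨n, hn⟩ => lt_of_lt_of_le (by simp; positivity) hn⟩
    obtain ⟨n, hn⟩ := exists_nat_one_div_lt (sub_pos.2 hω)
    exact ⟨n, by linarith⟩
  have hmono : Monotone fun n : ℕ => {ω | t + 1 / ((n : ℝ) + 1) ≤ S ω} :=
    fun n k hnk => Set.ofPred_subset_ofPred.2 fun ω hω => by
      linarith [Nat.one_div_le_one_div (α := ℝ) hnk]
  rw [hunion, hmono.measure_iUnion]
  exact iSup_le fun n => h _ (by simp; positivity)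

lemma ofReal_one_sub_le_measure_le_of_mgf_le [IsProbabilityMeasure μ] {S : Ω → ℝ}
    (hS : Measurable S) {v t ε : ℝ} (hε : ε ∈ Set.Ioo (0 : ℝ) 1)
    (hint : ∀ θ, 0 ≤ θ → Integrable (fun ω => exp (θ * S ω)) μ)
    (hmgf : ∀ θ, 0 ≤ θ → mgf S μ θ ≤ exp (θ ^ 2 * v / 2))
    (ht : √(-2 * log ε) * √v ≤ t) :
    ENNReal.ofReal (1 - ε) ≤ μ {ω | S ω ≤ t} := by
  obtain ⟨hε0, hε1⟩ := hε
  have hc : 0 ≤ -2 * log ε := by linarith [log_neg hε0 hε1]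
  have htail : μ {ω | t < S ω} ≤ ENNReal.ofReal ε := by
    -- Thresholds `s > t` are needed: when `v = 0` the threshold `t` itself may be `0`.
    refine measure_lt_le_of_forall_lt fun s hs => ?_
    have hsqrt : √(-2 * log ε * v) ≤ s := by
      rw [sqrt_mul hc]
      exact ht.trans hs.le
    have hs0 : 0 < s := lt_of_le_of_lt ((mul_nonneg (sqrt_nonneg _) (sqrt_nonneg _)).trans ht) hs
    have hbound := measureReal_ge_le_exp_of_mgf_le hint hmgf hc hs0 (sqrt_le_iff.1 hsqrt).2
    rw [show -(-2 * log ε) / 2 = log ε by ring, exp_log hε0] at hbound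
    rw [← ofReal_measureReal]
    exact ENNReal.ofReal_le_ofReal hbound
  have hcompl : {ω | S ω ≤ t} = {ω | t < S ω}ᶜ := by ext; simp
  rw [hcompl, prob_compl_eq_one_sub (measurableSet_lt measurable_const hS),
    ENNReal.ofReal_sub _ hε0.le, ENNReal.ofReal_one]
  exact tsub_le_tsub_left htail 1

end Chernoff

theorem stmt_6_general {Ω : Type*} [MeasurableSpace Ω] (μ : Measure Ω) [IsProbabilityMeasure μ]
    (n : ℕ) (X : Fin n → Ω → ℝ) (hX : ∀ j, Measurable (X j))
    (hindep : iIndepFun X μ)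
    (m : Fin n → ℝ)
    (hint : ∀ j, ∀ θ : ℝ, Integrable (fun ω => Real.exp (θ * (X j ω - m j))) μ)
    (hfin_f : ∀ j, BddAbove (fwdDevSet μ (fun ω => X j ω - m j)))
    (hfin_b : ∀ j, BddAbove (fwdDevSet μ (fun ω => -(X j ω - m j))))
    (a : Fin n → ℝ) (b : ℝ) (ε : ℝ) (hε : ε ∈ Set.Ioo (0 : ℝ) 1)
    (u : Fin n → ℝ)
    (hu : ∀ j, u j = max (a j * fwdDev μ (fun ω => X j ω - m j))
                        (-a j * fwdDev μ (fun ω => -(X j ω - m j))))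
    (hsoc : ∑ j, a j * m j + Real.sqrt (-2 * Real.log ε) * Real.sqrt (∑ j, u j ^ 2) ≤ b) :
    ENNReal.ofReal (1 - ε) ≤ μ {ω | ∑ j, a j * X j ω ≤ b} := by
  set Y : Fin n → Ω → ℝ := fun j ω => a j * (X j ω - m j)
  have hY_meas : ∀ j, Measurable (Y j) := fun j => ((hX j).sub_const _).const_mul _
  have hY_indep : iIndepFun Y μ :=
    hindep.comp _ fun j => (measurable_id.sub_const _).const_mul (a j)
  have hY_int : ∀ j θ, Integrable (fun ω => exp (θ * Y j ω)) μ := fun j θ => by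
    simpa only [Y, mul_assoc] using hint j (θ * a j)
  have hY_mgf : ∀ j θ, 0 ≤ θ → mgf (Y j) μ θ ≤ exp (θ ^ 2 * u j ^ 2 / 2) := fun j θ hθ => by
    rw [hu j]
    exact mgf_const_mul_le_exp_max_fwdDev (hfin_f j) (hfin_b j) (a j) hθ
  have hset : {ω | ∑ j, a j * X j ω ≤ b} = {ω | (∑ j, Y j) ω ≤ b - ∑ j, a j * m j} := by
    ext ω
    simp only [Set.mem_ofPred_eq, Finset.sum_apply, Y, mul_sub, Finset.sum_sub_distrib]
    constructor <;> intro h <;> linarith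
  rw [hset]
  exact ofReal_one_sub_le_measure_le_of_mgf_le (S := ∑ j, Y j) (by fun_prop) hε
    (fun θ _ => hY_indep.integrable_exp_mul_sum hY_meas fun j _ => hY_int j θ)
    (fun θ hθ => hY_indep.mgf_sum_le_exp hY_meas _ _ fun j _ => hY_mgf j θ hθ)
    (by linarith)

/-- For independent random variables `X₁,…,Xₙ` with means `mⱼ` whose centred versions have
finite forward deviations `σ_{f,j}` and backward deviations `σ_{b,j}`, and
`uⱼ = max(aⱼ σ_{f,j}, −aⱼ σ_{b,j})`: if `⟨a,m⟩ + √(−2 log ε)·‖u‖₂ ≤ b` then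
`Pr(⟨a,X⟩ ≤ b) ≥ 1 − ε`; the second-order cone constraint with safety factor `√(−2 ln ε)`
is a safe approximation of the chance constraint at level `ε`. -/
theorem stmt_6 {Ω : Type*} [MeasurableSpace Ω] (μ : Measure Ω) [IsProbabilityMeasure μ]
    (n : ℕ) (X : Fin n → Ω → ℝ) (hX : ∀ j, Measurable (X j))
    (hindep : iIndepFun X μ)
    (m : Fin n → ℝ) (hm : ∀ j, m j = ∫ ω, X j ω ∂μ)
    (hint : ∀ j, ∀ θ : ℝ, Integrable (fun ω => Real.exp (θ * (X j ω - m j))) μ)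
    (hfin_f : ∀ j, BddAbove (fwdDevSet μ (fun ω => X j ω - m j)))
    (hfin_b : ∀ j, BddAbove (fwdDevSet μ (fun ω => -(X j ω - m j))))
    (a : Fin n → ℝ) (b : ℝ) (ε : ℝ) (hε : ε ∈ Set.Ioo (0 : ℝ) 1)
    (u : Fin n → ℝ)
    (hu : ∀ j, u j = max (a j * fwdDev μ (fun ω => X j ω - m j))
                        (-a j * fwdDev μ (fun ω => -(X j ω - m j))))
    (hsoc : ∑ j, a j * m j + Real.sqrt (-2 * Real.log ε) * Real.sqrt (∑ j, u j ^ 2) ≤ b) :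
    ENNReal.ofReal (1 - ε) ≤ μ {ω | ∑ j, a j * X j ω ≤ b} :=
  stmt_6_general μ n X hX hindep m hint hfin_f hfin_b a b ε hε u hu hsoc
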